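/- arXiv:1407.2800 — 2 statements merged into one kernel-verified Lean document; each statement's English description precedes it below -/
import Mathlib

section
/- Let A = (a_{st}) be an n×n complex correlation matrix. Then for all indices i < j < q one has | |a_{ij}| − |a_{iq}| | ≤ √(1 − |a_{jq}|²) ≤ √2 · √(1 − |a_{jq}|). -/
/-! A positive semidefinite matrix with unit diagonal is the Gram matrix of unit vectors `v s`.
With `c = ⟪v q, v j⟫`, the residual `v j - c • v q` has norm `√(1 - ‖c‖²)`, and Cauchy–Schwarz
against `v i` gives `‖⟪v i, v j⟫‖ - ‖c‖ ‖⟪v i, v q⟫‖ ≤ √(1 - ‖c‖²)`; swapping `j` and `q` gives the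
absolute value. The second inequality is `1 - x² ≤ 2 (1 - x)`, i.e. `(1 - x)² ≥ 0`. -/

open Real ComplexOrder
open scoped InnerProductSpace

theorem Matrix.PosSemidef.exists_eq_gram {𝕜 ι : Type*} [RCLike 𝕜] [Fintype ι] [DecidableEq ι]
    {A : Matrix ι ι 𝕜} (hA : A.PosSemidef) : ∃ v : ι → EuclideanSpace 𝕜 ι, A = Matrix.gram 𝕜 v := by
  obtain ⟨B, rfl⟩ : ∃ B : Matrix ι ι 𝕜, A = star B * B := by
    open scoped MatrixOrder Matrix.Norms.L2Operator in
    exact CStarAlgebra.nonneg_iff_eq_star_mul_self.mp hA.nonneg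
  refine ⟨fun t => WithLp.toLp 2 (fun k => B k t), ?_⟩
  rw [Matrix.gram_eq_conjTranspose_mul (EuclideanSpace.basisFun ι 𝕜)]
  rfl

section UnitVectors

variable {𝕜 E : Type*} [RCLike 𝕜] [NormedAddCommGroup E] [InnerProductSpace 𝕜 E]

theorem norm_eq_one_of_inner_self_eq_one {x : E} (hx : ⟪x, x⟫_𝕜 = 1) : ‖x‖ = 1 := by
  rw [norm_eq_sqrt_re_inner (𝕜 := 𝕜), hx, RCLike.one_re, Real.sqrt_one]

theorem norm_sub_inner_smul_sq {v w : E} (hw : ‖w‖ = 1) :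
    ‖v - ⟪w, v⟫_𝕜 • w‖ ^ 2 = ‖v‖ ^ 2 - ‖⟪w, v⟫_𝕜‖ ^ 2 := by
  rw [@norm_sub_sq 𝕜, inner_smul_right, ← inner_conj_symm, RCLike.conj_mul, norm_smul, hw]
  simp only [RCLike.norm_conj, ← RCLike.ofReal_pow, RCLike.ofReal_re, mul_one]
  ring

theorem norm_inner_sub_norm_inner_le {u v w : E} (hu : ‖u‖ = 1) (hv : ‖v‖ = 1) (hw : ‖w‖ = 1) :
    ‖⟪u, v⟫_𝕜‖ - ‖⟪u, w⟫_𝕜‖ ≤ √(1 - ‖⟪v, w⟫_𝕜‖ ^ 2) := by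
  set c := ⟪w, v⟫_𝕜
  have hc : ‖c‖ ≤ 1 := by simpa [hv, hw] using norm_inner_le_norm (𝕜 := 𝕜) w v
  have huw : ‖⟪u, w⟫_𝕜‖ ≤ 1 := by simpa [hu, hw] using norm_inner_le_norm (𝕜 := 𝕜) u w
  calc ‖⟪u, v⟫_𝕜‖ - ‖⟪u, w⟫_𝕜‖ ≤ ‖⟪u, v⟫_𝕜‖ - ‖c * ⟪u, w⟫_𝕜‖ := by
        rw [norm_mul]; nlinarith [norm_nonneg ⟪u, w⟫_𝕜]
    _ ≤ ‖⟪u, v⟫_𝕜 - c * ⟪u, w⟫_𝕜‖ := norm_sub_norm_le _ _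
    _ = ‖⟪u, v - c • w⟫_𝕜‖ := by rw [inner_sub_right, inner_smul_right]
    _ ≤ ‖v - c • w‖ := by simpa [hu] using norm_inner_le_norm (𝕜 := 𝕜) u (v - c • w)
    _ = √(1 - ‖⟪v, w⟫_𝕜‖ ^ 2) := by
        have h := norm_sub_inner_smul_sq (𝕜 := 𝕜) (v := v) hw
        rw [hv, one_pow] at h
        rw [← norm_inner_symm, ← h, Real.sqrt_sq (norm_nonneg _)]

theorem abs_norm_inner_sub_norm_inner_le {u v w : E} (hu : ‖u‖ = 1) (hv : ‖v‖ = 1)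
    (hw : ‖w‖ = 1) : |‖⟪u, v⟫_𝕜‖ - ‖⟪u, w⟫_𝕜‖| ≤ √(1 - ‖⟪v, w⟫_𝕜‖ ^ 2) := by
  refine abs_sub_le_iff.mpr ⟨norm_inner_sub_norm_inner_le hu hv hw, ?_⟩
  rw [norm_inner_symm v w]
  exact norm_inner_sub_norm_inner_le hu hw hv

end UnitVectors

theorem Real.sqrt_one_sub_sq_le (x : ℝ) : √(1 - x ^ 2) ≤ √2 * √(1 - x) := by
  rw [← Real.sqrt_mul zero_le_two]
  exact Real.sqrt_le_sqrt (by nlinarith [sq_nonneg (1 - x)])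

theorem stmt4_general {n : ℕ} (A : Matrix (Fin n) (Fin n) ℂ)
    (hA : A.PosSemidef) (hdiag : ∀ i, A i i = 1)
    (i j q : Fin n) :
    |‖A i j‖ - ‖A i q‖| ≤
        Real.sqrt (1 - ‖A j q‖ ^ 2) ∧
      Real.sqrt (1 - ‖A j q‖ ^ 2) ≤
        Real.sqrt 2 * Real.sqrt (1 - ‖A j q‖) := by
  obtain ⟨v, rfl⟩ := hA.exists_eq_gram
  have hv : ∀ s, ‖v s‖ = 1 := fun s => norm_eq_one_of_inner_self_eq_one (𝕜 := ℂ) (hdiag s)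
  exact ⟨abs_norm_inner_sub_norm_inner_le (hv i) (hv j) (hv q), Real.sqrt_one_sub_sq_le _⟩

theorem stmt4 {n : ℕ} (A : Matrix (Fin n) (Fin n) ℂ)
    (hA : A.PosSemidef) (hdiag : ∀ i, A i i = 1)
    (i j q : Fin n) (hij : i < j) (hjq : j < q) :
    |‖A i j‖ - ‖A i q‖| ≤
        Real.sqrt (1 - ‖A j q‖ ^ 2) ∧
      Real.sqrt (1 - ‖A j q‖ ^ 2) ≤
        Real.sqrt 2 * Real.sqrt (1 - ‖A j q‖) :=
  stmt4_general A hA hdiag i j q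
end

section
/- Let a, b, c be real numbers such that the 3×3 matrix B = [[1,a,b],[a,1,c],[b,c,1]] is positive semidefinite. Then for every real number k ≥ 2, (1 − |a|^k)^{1/k} ≤ (1 − |b|^k)^{1/k} + (1 − |c|^k)^{1/k}. -/
/-!
Positive semidefiniteness of `B` gives `a², b², c² ≤ 1` and `(a - bc)² ≤ (1 - b²)(1 - c²)`,
and the latter survives replacing `a, b, c` by `p = |a|, q = |b|, r = |c|`. Since `t ↦ t ^ (2/k)`
is subadditive, it suffices to show `√(1 - p^k) ≤ √(1 - q^k) + √(1 - r^k)`. This is clear when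
`q² + r² ≤ 1`. Otherwise write `q = cos β`, `r = cos γ` with `β + γ < π/2`; the hypothesis says
`p ≥ cos (β + γ)`. In terms of `x = sin θ`, `√(1 - cos^k θ) = ψ(x) := √(1 - (1 - x²)^(k/2))`, and
`ψ(x)/x` is nonincreasing because `z ↦ 1 - (1 - z)^(k/2)` is concave and vanishes at `0`. So `ψ`
is subadditive and monotone, whence
`ψ(sin (β + γ)) ≤ ψ(sin β cos γ) + ψ(cos β sin γ) ≤ ψ(sin β) + ψ(sin γ)`.
-/

open Real Set

lemma one_sub_one_sub_rpow_div_antitoneOn {m : ℝ} (hm : 1 ≤ m) :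
    AntitoneOn (fun z : ℝ ↦ (1 - (1 - z) ^ m) / z) (Ioc 0 1) := by
  intro z ⟨hz, hz1⟩ Z ⟨hZ, hZ1⟩ hzZ
  have h := (convexOn_rpow hm).secant_mono (a := 1) (x := 1 - Z) (y := 1 - z)
    (by simp) (by simp; linarith) (by simp; linarith) (by linarith) (by linarith) (by linarith)
  simp only [one_rpow, sub_sub_cancel_left] at h
  rwa [div_neg, div_neg, ← neg_div, ← neg_div, neg_sub, neg_sub] at h

lemma add_le_add_of_antitoneOn_div {f : ℝ → ℝ} {s : Set ℝ} (hf : AntitoneOn (fun z ↦ f z / z) s)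
    {x y : ℝ} (hx : 0 < x) (hy : 0 < y) (hxs : x ∈ s) (hys : y ∈ s) (hxys : x + y ∈ s) :
    f (x + y) ≤ f x + f y := by
  have hfx : f (x + y) / (x + y) ≤ f x / x := hf hxs hxys (by linarith)
  have hfy : f (x + y) / (x + y) ≤ f y / y := hf hys hxys (by linarith)
  calc f (x + y) = x * (f (x + y) / (x + y)) + y * (f (x + y) / (x + y)) := by
        field_simp
    _ ≤ x * (f x / x) + y * (f y / y) := by gcongr
    _ = f x + f y := by field_simp

/-- `psi k (sin θ) = √(1 - cos θ ^ k)` for `θ ∈ [0, π/2]`. -/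
noncomputable def psi (k z : ℝ) : ℝ := √(1 - (1 - z ^ 2) ^ (k / 2))

@[simp] lemma psi_zero (k : ℝ) : psi k 0 = 0 := by simp [psi]

lemma psi_eq_sqrt_one_sub_rpow {k z w : ℝ} (hw : 0 ≤ w) (hzw : z ^ 2 + w ^ 2 = 1) :
    psi k z = √(1 - w ^ k) := by
  rw [psi, show 1 - z ^ 2 = w ^ (2 : ℝ) by rw [rpow_two]; linarith, ← rpow_mul hw]
  ring_nf

lemma monotoneOn_psi {k : ℝ} (hk : 0 ≤ k) : MonotoneOn (psi k) (Icc 0 1) := by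
  intro x ⟨hx, hx1⟩ y ⟨hy, hy1⟩ hxy
  unfold psi
  gcongr
  nlinarith

lemma antitoneOn_psi_div {k : ℝ} (hk : 2 ≤ k) : AntitoneOn (fun z ↦ psi k z / z) (Ioc 0 1) := by
  intro x ⟨hx, hx1⟩ y ⟨hy, hy1⟩ hxy
  have h := one_sub_one_sub_rpow_div_antitoneOn (m := k / 2) (by linarith)
    ⟨by positivity, by nlinarith⟩ ⟨by positivity, by nlinarith⟩ (by nlinarith : x ^ 2 ≤ y ^ 2)
  have hsq : ∀ z : ℝ, 0 < z → psi k z / z = √((1 - (1 - z ^ 2) ^ (k / 2)) / z ^ 2) := by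
    intro z hz
    rw [psi, sqrt_div' _ (by positivity), sqrt_sq hz.le]
  simp only [hsq x hx, hsq y hy]
  exact sqrt_le_sqrt h

lemma psi_add_le {k x y : ℝ} (hk : 2 ≤ k) (hx : 0 ≤ x) (hy : 0 ≤ y) (hxy : x + y ≤ 1) :
    psi k (x + y) ≤ psi k x + psi k y := by
  rcases hx.eq_or_lt with rfl | hx
  · simp
  rcases hy.eq_or_lt with rfl | hy
  · simp
  exact add_le_add_of_antitoneOn_div (antitoneOn_psi_div hk) hx hy
    ⟨hx, by linarith⟩ ⟨hy, by linarith⟩ ⟨by positivity, hxy⟩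

lemma rpow_one_div_le_add_of_sqrt_le {k w x y : ℝ} (hk : 2 ≤ k) (hw : 0 ≤ w) (hx : 0 ≤ x)
    (hy : 0 ≤ y) (h : √w ≤ √x + √y) : w ^ (1 / k) ≤ x ^ (1 / k) + y ^ (1 / k) := by
  have hroot : ∀ z : ℝ, 0 ≤ z → z ^ (1 / k) = √z ^ (2 / k) := by
    intro z hz
    rw [sqrt_eq_rpow, ← rpow_mul hz]
    ring_nf
  rw [hroot w hw, hroot x hx, hroot y hy]
  calc √w ^ (2 / k) ≤ (√x + √y) ^ (2 / k) := by gcongr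
    _ ≤ √x ^ (2 / k) + √y ^ (2 / k) :=
      rpow_add_le_add_rpow (sqrt_nonneg x) (sqrt_nonneg y) (by positivity)
        ((div_le_one (by linarith)).2 hk)

lemma one_sub_sq_le_sqrt_one_sub_rpow {k q : ℝ} (hk : 2 ≤ k) (hq : q ∈ Icc 0 1) :
    1 - q ^ 2 ≤ √(1 - q ^ k) := by
  obtain ⟨hq0, hq1⟩ := hq
  have hqk : q ^ k ≤ q ^ 2 := by
    simpa using rpow_le_rpow_of_exponent_ge' hq0 hq1 zero_le_two hk
  have hq2 : 0 ≤ 1 - q ^ 2 := by nlinarith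
  rw [le_sqrt hq2 (by nlinarith)]
  nlinarith [mul_nonneg (sq_nonneg q) hq2]

lemma sqrt_one_sub_rpow_le_add_of_one_lt {k p q r : ℝ} (hk : 2 ≤ k) (hq : q ∈ Icc 0 1)
    (hr : r ∈ Icc 0 1) (h : (p - q * r) ^ 2 ≤ (1 - q ^ 2) * (1 - r ^ 2))
    (hqr : 1 < q ^ 2 + r ^ 2) : √(1 - p ^ k) ≤ √(1 - q ^ k) + √(1 - r ^ k) := by
  obtain ⟨hq0, hq1⟩ := hq
  obtain ⟨hr0, hr1⟩ := hr
  set s := √(1 - q ^ 2)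
  set t := √(1 - r ^ 2)
  have hs : q ^ 2 + s ^ 2 = 1 := by rw [sq_sqrt (by nlinarith)]; ring
  have ht : r ^ 2 + t ^ 2 = 1 := by rw [sq_sqrt (by nlinarith)]; ring
  have hst : (s * t) ^ 2 = (1 - q ^ 2) * (1 - r ^ 2) := by
    linear_combination t ^ 2 * hs + (1 - q ^ 2) * ht
  have hs1 : s ≤ 1 := by nlinarith [sqrt_nonneg (1 - q ^ 2)]
  have ht1 : t ≤ 1 := by nlinarith [sqrt_nonneg (1 - r ^ 2)]
  -- With `q = cos β`, `r = cos γ`: `u = cos (β + γ)` and `σ = sin (β + γ)`.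
  set u := q * r - s * t
  set σ := q * t + r * s
  have hu : 0 ≤ u := by
    have : (s * t) ^ 2 ≤ (q * r) ^ 2 := by nlinarith
    nlinarith [abs_le_of_sq_le_sq' this (by positivity)]
  have hup : u ≤ p := by
    nlinarith [abs_le_of_sq_le_sq' (hst ▸ h) (by positivity)]
  have hσu : σ ^ 2 + u ^ 2 = 1 := by linear_combination (r ^ 2 + t ^ 2) * hs + ht
  calc √(1 - p ^ k) ≤ √(1 - u ^ k) := by gcongr
    _ = psi k σ := (psi_eq_sqrt_one_sub_rpow hu hσu).symm
    _ ≤ psi k (q * t) + psi k (r * s) :=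
      psi_add_le hk (by positivity) (by positivity) (by nlinarith)
    _ ≤ psi k t + psi k s := by
      gcongr
      · exact monotoneOn_psi (by linarith) ⟨by positivity, by nlinarith⟩ ⟨by positivity, ht1⟩
          (mul_le_of_le_one_left (sqrt_nonneg _) hq1)
      · exact monotoneOn_psi (by linarith) ⟨by positivity, by nlinarith⟩ ⟨by positivity, hs1⟩
          (mul_le_of_le_one_left (sqrt_nonneg _) hr1)
    _ = √(1 - q ^ k) + √(1 - r ^ k) := by
      rw [psi_eq_sqrt_one_sub_rpow hr0 (by linarith), psi_eq_sqrt_one_sub_rpow hq0 (by linarith),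
        add_comm]

lemma sqrt_one_sub_rpow_le_add {k p q r : ℝ} (hk : 2 ≤ k) (hp : 0 ≤ p) (hq : q ∈ Icc 0 1)
    (hr : r ∈ Icc 0 1) (h : (p - q * r) ^ 2 ≤ (1 - q ^ 2) * (1 - r ^ 2)) :
    √(1 - p ^ k) ≤ √(1 - q ^ k) + √(1 - r ^ k) := by
  rcases lt_or_ge 1 (q ^ 2 + r ^ 2) with hqr | hqr
  · exact sqrt_one_sub_rpow_le_add_of_one_lt hk hq hr h hqr
  calc √(1 - p ^ k) ≤ 1 := sqrt_le_one.2 (by linarith [rpow_nonneg hp k])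
    _ ≤ (1 - q ^ 2) + (1 - r ^ 2) := by linarith
    _ ≤ √(1 - q ^ k) + √(1 - r ^ k) := by
      gcongr <;> exact one_sub_sq_le_sqrt_one_sub_rpow hk ‹_›

lemma one_sub_rpow_rpow_one_div_le_add {k p q r : ℝ} (hk : 2 ≤ k) (hp : p ∈ Icc 0 1)
    (hq : q ∈ Icc 0 1) (hr : r ∈ Icc 0 1) (h : (p - q * r) ^ 2 ≤ (1 - q ^ 2) * (1 - r ^ 2)) :
    (1 - p ^ k) ^ (1 / k) ≤ (1 - q ^ k) ^ (1 / k) + (1 - r ^ k) ^ (1 / k) := by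
  have one_sub_rpow_nonneg : ∀ x ∈ Icc (0 : ℝ) 1, 0 ≤ 1 - x ^ k := fun x hx ↦
    sub_nonneg.2 (rpow_le_one hx.1 hx.2 (by linarith))
  exact rpow_one_div_le_add_of_sqrt_le hk (one_sub_rpow_nonneg p hp) (one_sub_rpow_nonneg q hq)
    (one_sub_rpow_nonneg r hr) (sqrt_one_sub_rpow_le_add hk hp.1 hq hr h)

lemma sq_le_one_of_posSemidef {a b c : ℝ}
    (hB : Matrix.PosSemidef !![1, a, b; a, 1, c; b, c, 1]) :
    a ^ 2 ≤ 1 ∧ b ^ 2 ≤ 1 ∧ c ^ 2 ≤ 1 := by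
  have hab := (hB.submatrix ![0, 1]).det_nonneg
  have hac := (hB.submatrix ![0, 2]).det_nonneg
  have hbc := (hB.submatrix ![1, 2]).det_nonneg
  simp only [Matrix.det_fin_two, Matrix.submatrix_apply, Matrix.of_apply, Matrix.cons_val',
    Matrix.cons_val, Matrix.cons_val_fin_one] at hab hac hbc
  exact ⟨by nlinarith, by nlinarith, by nlinarith⟩

lemma sq_sub_mul_le_of_posSemidef {a b c : ℝ}
    (hB : Matrix.PosSemidef !![1, a, b; a, 1, c; b, c, 1]) :
    (a - b * c) ^ 2 ≤ (1 - b ^ 2) * (1 - c ^ 2) := by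
  have hdet := hB.det_nonneg
  simp only [Matrix.det_fin_three, Matrix.of_apply, Matrix.cons_val', Matrix.cons_val,
    Matrix.cons_val_fin_one] at hdet
  nlinarith

lemma sq_abs_sub_abs_mul_abs_le (a b c : ℝ) : (|a| - |b| * |c|) ^ 2 ≤ (a - b * c) ^ 2 := by
  rw [← abs_mul]
  exact sq_le_sq.2 (by simpa using abs_abs_sub_abs_le_abs_sub a (b * c))

theorem stmt16 (a b c : ℝ)
    (hB : Matrix.PosSemidef !![1, a, b; a, 1, c; b, c, 1])
    (k : ℝ) (hk : 2 ≤ k) :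
    (1 - |a| ^ k) ^ (1 / k) ≤ (1 - |b| ^ k) ^ (1 / k) + (1 - |c| ^ k) ^ (1 / k) := by
  obtain ⟨ha, hb, hc⟩ := sq_le_one_of_posSemidef hB
  have abs_mem : ∀ x : ℝ, x ^ 2 ≤ 1 → |x| ∈ Icc 0 1 := fun x hx ↦
    ⟨abs_nonneg x, sq_le_one_iff_abs_le_one x |>.1 hx⟩
  refine one_sub_rpow_rpow_one_div_le_add hk (abs_mem a ha) (abs_mem b hb) (abs_mem c hc) ?_
  rw [sq_abs, sq_abs]
  exact (sq_abs_sub_abs_mul_abs_le a b c).trans (sq_sub_mul_le_of_posSemidef hB)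
end
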